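/- Fix integers m, n ≥ 1 and let ℓ ∈ ℂ[u, u⁻¹] be a Laurent polynomial of the form ℓ = uᵐ + Σ_{i=−n}^{m−1} cᵢuⁱ with c₋ₙ ≠ 0, and let χ̂ ∈ ℂ((u)) be a series of order −1 with χ̂ⁿ = ℓ. Then for all integers 0 ≤ k₁, k₂ ≤ n one has −res_φ [ (ℓ′χ̂^{−k₁})₋ · (ℓ′χ̂^{−k₂})₋ / ℓ′ ] dz = n·δ_{n, k₁+k₂}. -/

import Mathlib

noncomputable section

open HahnSeries

/-- Formal Laurent series over `ℂ`: the field `ℂ((u))`, where the Hahn-series variable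
is `u` itself (the coefficient of `uⁱ` is the Hahn coefficient at index `i`). -/
abbrev LS : Type := LaurentSeries ℂ

/-- Termwise derivative `d/du`. -/
def Du (f : LS) : LS := LaurentSeries.derivative ℂ f

/-- Truncation keeping the coefficients with index satisfying `P`. -/
def truncP (P : ℤ → Prop) [DecidablePred P] (f : LS) : LS :=
  ⟨fun j => if P j then f.coeff j else 0, by
    refine f.isPWO_support'.mono ?_
    intro j hj
    have hj' : (if P j then f.coeff j else 0) ≠ 0 := hj
    by_cases h : P j
    · simpa [h] using hj'
    · simp [h] at hj'⟩

/-- `f₋`: the part of `f ∈ ℂ((u))` with negative powers of `u`. -/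
def uNeg (f : LS) : LS := truncP (fun j => j < 0) f

/-- `res_φ f dz`: the coefficient of `u⁻¹`. -/
def resPhi (f : LS) : ℂ := f.coeff (-1)

/-- The Laurent polynomial `ℓ = uᵐ + Σ_{i=−n}^{m−1} cᵢuⁱ` in `ℂ((u))`. -/
def ellStd (m n : ℕ) (c : ℤ → ℂ) : LS :=
  single (m : ℤ) 1 + ∑ i ∈ Finset.Icc (-(n : ℤ)) ((m : ℤ) - 1), single i (c i)

/-!
Since `ℓ = χⁿ`, the logarithmic derivative gives `ℓ′ χ^{-k} = n χ^{n-k} · χ′/χ`. For `k ≠ n` this is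
`n/(n-k)` times the derivative of `χ^{n-k}`, which has no residue; for `k = n` it is `n χ′/χ`, whose
residue is `n` times the order `-1` of `χ`. Writing `(ℓ′ χ^{-k})₋ = ℓ′ χ^{-k} - Pₖ` with `Pₖ` a power
series, the integrand is `ℓ′ χ^{-k₁-k₂}` minus a power series, because `χ⁻¹` and `1/ℓ′` (of order
`n + 1`) are power series.
-/

namespace HahnSeries

variable {Γ R : Type*} [LinearOrder Γ] [Zero R]

theorem orderTop_eq_of_coeff {f : R⟦Γ⟧} {o : Γ} (h : f.coeff o ≠ 0)
    (hlt : ∀ j < o, f.coeff j = 0) : f.orderTop = o :=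
  le_antisymm (orderTop_le_of_coeff_ne_zero h)
    (le_orderTop_iff_forall.2 fun j hj => hlt j (WithTop.coe_lt_coe.1 hj))

end HahnSeries

open scoped PowerSeries

namespace LaurentSeries

section CommRing

variable {R : Type*} [CommRing R]

theorem derivative_coeff (f : R⸨X⸩) (j : ℤ) :
    (derivative R f).coeff j = (j + 1) • f.coeff (j + 1) := by
  simp

theorem derivative_single (a : ℤ) (r : R) :
    derivative R (single a r) = single (a - 1) (a • r) := by
  simp

theorem coeff_neg_one_derivative (f : R⸨X⸩) : (derivative R f).coeff (-1) = 0 := by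
  simp

theorem derivative_coe (p : R⟦X⟧) :
    derivative R (p : R⸨X⸩) = (PowerSeries.derivative R p : R⸨X⸩) := by
  ext j
  rw [derivative_coeff, PowerSeries.coeff_coe, PowerSeries.coeff_coe]
  rcases lt_or_ge j 0 with hj | hj
  · rw [if_pos hj]
    split_ifs
    · exact smul_zero _
    · rw [show j + 1 = 0 by omega, zero_smul]
  · lift j to ℕ using hj
    rw [if_neg (by omega), if_neg (by omega), PowerSeries.coeff_derivative, zsmul_eq_mul,
      Int.natAbs_natCast, show ((j : ℤ) + 1).natAbs = j + 1 by omega]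
    push_cast
    ring

theorem derivative_single_mul (a : ℤ) (r : R) (f : R⸨X⸩) :
    derivative R (single a r * f) =
      derivative R (single a r) * f + single a r * derivative R f := by
  ext j
  rw [derivative_single, coeff_add, coeff_single_mul, coeff_single_mul, derivative_coeff,
    derivative_coeff, coeff_single_mul, sub_sub_eq_add_sub, add_sub_right_comm]
  simp only [zsmul_eq_mul]
  push_cast
  ring

/-- Write `f = Xᵃ p`, `g = Xᵇ q` with power series `p, q`: the Leibniz rule for monomials
and for power series gives it in general. -/
theorem derivative_mul (f g : R⸨X⸩) :
    derivative R (f * g) = derivative R f * g + f * derivative R g := by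
  rw [← single_order_mul_powerSeriesPart f, ← single_order_mul_powerSeriesPart g]
  set p := f.powerSeriesPart
  set q := g.powerSeriesPart
  have hs : single (f.order + g.order) (1 : R) = single f.order 1 * single g.order 1 := by
    rw [single_mul_single, one_mul]
  have hfg : single f.order (1 : R) * (p : R⸨X⸩) * (single g.order 1 * (q : R⸨X⸩)) =
      single (f.order + g.order) 1 * ((p * q : R⟦X⟧) : R⸨X⸩) := by
    rw [PowerSeries.coe_mul, hs]; ring
  rw [hfg, derivative_single_mul, derivative_coe, Derivation.leibniz, hs, derivative_single_mul,
    derivative_single_mul, derivative_single_mul, derivative_coe, derivative_coe, map_add]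
  simp only [smul_eq_mul, PowerSeries.coe_mul]
  ring

def derivation : Derivation R R⸨X⸩ R⸨X⸩ where
  toFun := derivative R
  map_add' := map_add _
  map_smul' r f := by
    rw [Algebra.smul_def, HahnSeries.algebraMap_apply', ← PowerSeries.C_eq_algebraMap,
      derivative_mul, derivative_coe, PowerSeries.derivative_C, PowerSeries.coe_zero, zero_mul,
      zero_add, PowerSeries.coe_C, C_mul_eq_smul, RingHom.id_apply]
  map_one_eq_zero' := by
    change derivative R (single 0 1) = 0
    rw [derivative_single, zero_smul, map_zero]
  leibniz' f g := by
    change derivative R (f * g) = f * derivative R g + g * derivative R f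
    rw [derivative_mul]
    ring

theorem derivation_apply (f : R⸨X⸩) : derivation f = derivative R f := rfl

end CommRing

section Field

variable {K : Type*} [Field K]

theorem _root_.PowerSeries.coe_inv {p : K⟦X⟧} (hp : PowerSeries.constantCoeff p ≠ 0) :
    ((p⁻¹ : K⟦X⟧) : K⸨X⸩) = (p : K⸨X⸩)⁻¹ :=
  (inv_eq_of_mul_eq_one_right (by
    rw [← PowerSeries.coe_mul, PowerSeries.mul_inv_cancel p hp, PowerSeries.coe_one])).symm

/-- With `f = Xᵒ p` and `p` a unit power series, `f′/f = o X⁻¹ + p′/p`. -/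
theorem coeff_neg_one_inv_mul_derivative {f : K⸨X⸩} (hf : f ≠ 0) :
    (f⁻¹ * derivative K f).coeff (-1) = f.order := by
  set o := f.order
  set p := f.powerSeriesPart
  have hfp : single o 1 * (p : K⸨X⸩) = f := single_order_mul_powerSeriesPart f
  have hp : PowerSeries.constantCoeff p ≠ 0 := by
    rw [← PowerSeries.coeff_zero_eq_constantCoeff_apply, powerSeriesPart_coeff]
    simpa using mt coeff_order_eq_zero.mp hf
  have hp' : (p : K⸨X⸩) ≠ 0 :=
    (map_ne_zero_iff _ ofPowerSeries_injective).2 fun h => hp (by rw [h, map_zero])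
  have hsingle : derivative K (single o (1 : K)) = single (-1) (o : K) * single o 1 := by
    rw [derivative_single, single_mul_single, mul_one, zsmul_one, neg_add_eq_sub]
  have key : f⁻¹ * derivative K f =
      single (-1) (o : K) + ((p⁻¹ * PowerSeries.derivative K p : K⟦X⟧) : K⸨X⸩) := by
    rw [← hfp, derivative_mul, derivative_coe, hsingle, PowerSeries.coe_mul, PowerSeries.coe_inv hp]
    field_simp
  rw [key, coeff_add, coeff_single_same, PowerSeries.coeff_coe, if_pos (by norm_num), add_zero]

theorem orderTop_zpow {f : K⸨X⸩} {o : ℤ} (hf : f.orderTop = o) (N : ℤ) :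
    (f ^ N).orderTop = ↑(N * o) := by
  have hpow : ∀ k : ℕ, addVal ℤ K (f ^ k) = ↑(k * o) := fun k => by
    rw [AddValuation.map_pow, addVal_apply, hf, ← WithTop.coe_nsmul, nsmul_eq_mul]
  rw [← addVal_apply]
  obtain ⟨k, rfl | rfl⟩ := Int.eq_nat_or_neg N
  · rw [zpow_natCast, hpow]
  · rw [zpow_neg, zpow_natCast, AddValuation.map_inv, hpow, neg_mul,
      WithTop.LinearOrderedAddCommGroup.coe_neg]

variable [CharZero K]

theorem coeff_neg_one_derivative_zpow_mul_zpow {f : K⸨X⸩} (hf : f ≠ 0) (N M : ℤ) :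
    (derivative K (f ^ N) * f ^ M).coeff (-1) = if N + M = 0 then (N : K) * f.order else 0 := by
  have hlog : ∀ L : ℤ, derivative K (f ^ L) = L • (f ^ L * (f⁻¹ * derivative K f)) := by
    intro L
    rw [← derivation_apply, Derivation.leibniz_zpow, zpow_sub_one₀ hf, smul_eq_mul,
      derivation_apply, mul_assoc]
  have hshift : derivative K (f ^ N) * f ^ M = N • (f ^ (N + M) * (f⁻¹ * derivative K f)) := by
    rw [hlog, smul_mul_assoc, zpow_add₀ hf]
    ring_nf
  rw [hshift, coeff_smul, zsmul_eq_mul]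
  split_ifs with h
  · rw [h, zpow_zero, one_mul, coeff_neg_one_inv_mul_derivative hf]
  · have := coeff_neg_one_derivative (f ^ (N + M))
    rw [hlog, coeff_smul, zsmul_eq_mul, mul_eq_zero, Int.cast_eq_zero] at this
    rw [this.resolve_left h, mul_zero]

theorem orderTop_derivative {f : K⸨X⸩} {o : ℤ} (hf : f.orderTop = o) (ho : o ≠ 0) :
    (derivative K f).orderTop = ↑(o - 1) := by
  refine orderTop_eq_of_coeff ?_ fun j hj => ?_
  · rw [derivative_coeff, sub_add_cancel, zsmul_eq_mul]
    exact mul_ne_zero (Int.cast_ne_zero.2 ho) (coeff_orderTop_ne hf)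
  · rw [derivative_coeff, coeff_eq_zero_of_lt_orderTop (by rw [hf]; exact_mod_cast (by omega)),
      smul_zero]

end Field

end LaurentSeries

open LaurentSeries

theorem uNeg_coeff (f : LS) (j : ℤ) : (uNeg f).coeff j = if j < 0 then f.coeff j else 0 := rfl

theorem orderTop_sub_uNeg_nonneg (f : LS) : 0 ≤ (f - uNeg f).orderTop :=
  le_orderTop_iff_forall.2 fun j hj => by
    rw [coeff_sub, uNeg_coeff, if_pos (by exact_mod_cast hj), sub_self]

theorem resPhi_uNeg_mul_uNeg_div {d a b : LS} (hd : d ≠ 0) (hd' : 0 ≤ d⁻¹.orderTop)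
    (ha : 0 ≤ a.orderTop) (hb : 0 ≤ b.orderTop) :
    resPhi (uNeg (d * a) * uNeg (d * b) / d) = resPhi (d * a * b) := by
  set P := d * a - uNeg (d * a) with hP
  set Q := d * b - uNeg (d * b) with hQ
  have hsplit : uNeg (d * a) * uNeg (d * b) / d = d * a * b - (P * b + a * Q - P * Q * d⁻¹) := by
    rw [hP, hQ]
    field_simp
    ring
  have hmul : ∀ {x y : LS}, 0 ≤ x.orderTop → 0 ≤ y.orderTop → 0 ≤ (x * y).orderTop :=
    fun hx hy => (add_nonneg hx hy).trans orderTop_add_le_mul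
  have hP' := orderTop_sub_uNeg_nonneg (d * a)
  have hQ' := orderTop_sub_uNeg_nonneg (d * b)
  have hrest : 0 ≤ (P * b + a * Q - P * Q * d⁻¹).orderTop :=
    (le_min ((le_min (hmul hP' hb) (hmul ha hQ')).trans min_orderTop_le_orderTop_add)
      (hmul (hmul hP' hQ') hd')).trans min_orderTop_le_orderTop_sub
  unfold resPhi
  rw [hsplit, coeff_sub, coeff_eq_zero_of_lt_orderTop (hrest.trans_lt' (by decide)), sub_zero]

theorem stmt11_general (m n : ℕ) (hn : 1 ≤ n) (c : ℤ → ℂ)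
    (χ : LS) (hχ1 : χ.coeff (-1) ≠ 0) (hχ2 : ∀ j : ℤ, j < -1 → χ.coeff j = 0)
    (hroot : χ ^ n = ellStd m n c) :
    ∀ k₁ k₂ : ℕ, k₁ ≤ n → k₂ ≤ n →
      -resPhi (uNeg (Du (ellStd m n c) * χ ^ (-(k₁ : ℤ))) *
          uNeg (Du (ellStd m n c) * χ ^ (-(k₂ : ℤ))) / Du (ellStd m n c))
        = (n : ℂ) * (if k₁ + k₂ = n then 1 else 0) := by
  intro k₁ k₂ _ _
  have hχ0 : χ ≠ 0 := ne_zero_of_coeff_ne_zero hχ1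
  have hχ : χ.orderTop = ((-1 : ℤ) : WithTop ℤ) := orderTop_eq_of_coeff hχ1 hχ2
  have hℓ : (derivative ℂ (χ ^ (n : ℤ))).orderTop = ↑((n : ℤ) * -1 - 1) :=
    orderTop_derivative (orderTop_zpow hχ n) (by omega)
  have hℓ0 : derivative ℂ (χ ^ (n : ℤ)) ≠ 0 := orderTop_ne_top.1 (hℓ ▸ WithTop.coe_ne_top)
  have hℓinv : 0 ≤ (derivative ℂ (χ ^ (n : ℤ)))⁻¹.orderTop := by
    rw [← zpow_neg_one, orderTop_zpow hℓ]
    exact_mod_cast (by omega)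
  have hreg : ∀ k : ℕ, 0 ≤ (χ ^ (-(k : ℤ))).orderTop := fun k => by
    rw [orderTop_zpow hχ]
    exact_mod_cast (by omega)
  have hord : χ.order = -1 := WithTop.coe_inj.1 ((order_eq_orderTop_of_ne_zero hχ0).trans hχ)
  rw [← hroot, Du, ← zpow_natCast, resPhi_uNeg_mul_uNeg_div hℓ0 hℓinv (hreg k₁) (hreg k₂),
    mul_assoc, ← zpow_add₀ hχ0, resPhi, coeff_neg_one_derivative_zpow_mul_zpow hχ0, hord]
  split_ifs <;> push_cast <;> first | omega | ring

/-- For `ℓ = uᵐ + Σ_{i=−n}^{m−1} cᵢuⁱ` with `c₋ₙ ≠ 0` and `χ̂ ∈ ℂ((u))`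
a series of order `−1` with `χ̂ⁿ = ℓ`, for all `0 ≤ k₁, k₂ ≤ n`:
`−res_φ [(ℓ′χ̂^{−k₁})₋ (ℓ′χ̂^{−k₂})₋ / ℓ′] dz = n·δ_{n,k₁+k₂}`. -/
theorem stmt11 (m n : ℕ) (hm : 1 ≤ m) (hn : 1 ≤ n) (c : ℤ → ℂ)
    (hc : c (-(n : ℤ)) ≠ 0)
    (χ : LS) (hχ1 : χ.coeff (-1) ≠ 0) (hχ2 : ∀ j : ℤ, j < -1 → χ.coeff j = 0)
    (hroot : χ ^ n = ellStd m n c) :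
    ∀ k₁ k₂ : ℕ, k₁ ≤ n → k₂ ≤ n →
      -resPhi (uNeg (Du (ellStd m n c) * χ ^ (-(k₁ : ℤ))) *
          uNeg (Du (ellStd m n c) * χ ^ (-(k₂ : ℤ))) / Du (ellStd m n c))
        = (n : ℂ) * (if k₁ + k₂ = n then 1 else 0) :=
  stmt11_general m n hn c χ hχ1 hχ2 hroot
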